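/- arXiv:0801.1344 — 6 statements merged into one kernel-verified Lean document; each statement's English description precedes it below -/
import Mathlib

section
/- Let 𝔦₁ and 𝔦₂ be ideals in a triangulated category 𝒯. If f₁: B → C is 𝔦₁-versal and f₂: A → B is 𝔦₂-versal, then the composite f₁∘f₂: A → C is (𝔦₁∘𝔦₂)-versal. -/
open CategoryTheory Limits Pretriangulated

universe v u

/-- An ideal in a preadditive category. -/
structure CatIdeal (C : Type u) [Category.{v} C] [Preadditive C] where
  carrier : ∀ A B : C, AddSubgroup (A ⟶ B)
  comp_mem_left : ∀ {A B X : C} (f : A ⟶ B) (g : B ⟶ X),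
    f ∈ carrier A B → f ≫ g ∈ carrier A X
  comp_mem_right : ∀ {A B X : C} (h : X ⟶ A) (f : A ⟶ B),
    f ∈ carrier A B → h ≫ f ∈ carrier X B

/-- The product of two classes of morphisms. -/
def idealProd {C : Type u} [Category.{v} C]
    (I₁ I₂ : ∀ A B : C, Set (A ⟶ B)) : ∀ A B : C, Set (A ⟶ B) :=
  fun A B => {f | ∃ (X : C) (f₂ : A ⟶ X) (f₁ : X ⟶ B),
    f₂ ∈ I₂ A X ∧ f₁ ∈ I₁ X B ∧ f = f₂ ≫ f₁}

/-- A morphism `f : A ⟶ B` is versal for a class `I` of morphisms if it belongs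
to `I` and any `g ∈ I(A,C)` factors through `f`. -/
def IsVersal {C : Type u} [Category.{v} C]
    (I : ∀ A B : C, Set (A ⟶ B)) {A B : C} (f : A ⟶ B) : Prop :=
  f ∈ I A B ∧ ∀ (X : C) (g : A ⟶ X), g ∈ I A X → ∃ h : B ⟶ X, g = f ≫ h

/-- The composite of an `𝔦₂`-versal map followed by an `𝔦₁`-versal map is
`𝔦₁∘𝔦₂`-versal. -/
theorem versal_comp
    (C : Type u) [Category.{v} C] [Preadditive C] [HasZeroObject C] [HasShift C ℤ]
    [∀ n : ℤ, (shiftFunctor C n).Additive] [Pretriangulated C]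
    (I₁ I₂ : CatIdeal C) {A B D : C} (f₁ : B ⟶ D) (f₂ : A ⟶ B)
    (h₁ : IsVersal (fun X Y => (I₁.carrier X Y : Set (X ⟶ Y))) f₁)
    (h₂ : IsVersal (fun X Y => (I₂.carrier X Y : Set (X ⟶ Y))) f₂) :
    IsVersal (idealProd (fun X Y => (I₁.carrier X Y : Set (X ⟶ Y)))
      (fun X Y => (I₂.carrier X Y : Set (X ⟶ Y)))) (f₂ ≫ f₁) := by
  constructor
  · exact ⟨B, f₂, f₁, h₂.1, h₁.1, rfl⟩
  · rintro X g ⟨Y, g₂, g₁, hg₂, hg₁, rfl⟩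
    obtain ⟨h, rfl⟩ := h₂.2 Y g₂ hg₂
    obtain ⟨k, hk⟩ := h₁.2 X (h ≫ g₁) (I₁.comp_mem_right h g₁ hg₁)
    exact ⟨k, by rw [Category.assoc, hk, Category.assoc]⟩
end

section
/- Let 𝔦 be a homological ideal with enough projective objects in a triangulated category 𝒯. Then 𝔦 = 𝔦² if and only if the class Proj_𝔦 of 𝔦-projective objects is closed under extensions (i.e., whenever P₂ → P → P₁ → P₂[1] is an exact triangle with P₁, P₂ ∈ Proj_𝔦, then P ∈ Proj_𝔦). -/
open CategoryTheory Limits Pretriangulated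

universe v u v' u'

/-- Powers of an ideal. -/
def idealPow {C : Type u} [Category.{v} C]
    (I : ∀ A B : C, Set (A ⟶ B)) : ℕ → ∀ A B : C, Set (A ⟶ B)
  | 0 => fun _ _ => Set.univ
  | n + 1 => idealProd (idealPow I n) I

/-- `P` is `𝔦`-projective iff every morphism of `𝔦` out of `P` vanishes. -/
def IsProjI {C : Type u} [Category.{v} C] [Preadditive C]
    (I : CatIdeal C) (P : C) : Prop :=
  ∀ (B : C) (g : P ⟶ B), g ∈ I.carrier P B → g = 0

/-- For a homological ideal `𝔦` with enough projective objects in a triangulated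
category, `𝔦 = 𝔦²` if and only if the class of `𝔦`-projective objects is closed
under extensions. -/
theorem ideal_idempotent_iff_proj_closed_under_extensions
    (C : Type u) [Category.{v} C] [Preadditive C] [HasZeroObject C] [HasShift C ℤ]
    [∀ n : ℤ, (shiftFunctor C n).Additive] [Pretriangulated C]
    (A : Type u') [Category.{v'} A] [Abelian A]
    (F : C ⥤ A) [F.IsHomological]
    (I : CatIdeal C)
    (hker : ∀ {X Y : C} (f : X ⟶ Y), f ∈ I.carrier X Y ↔ F.map f = 0)
    (henough : ∀ X : C, ∃ (P : C) (π : P ⟶ X), IsProjI I P ∧ Epi (F.map π)) :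
    (∀ X Y : C, idealPow (fun X Y => (I.carrier X Y : Set (X ⟶ Y))) 2 X Y
        = (I.carrier X Y : Set (X ⟶ Y))) ↔
    (∀ T : Triangle C, T ∈ (distTriang C) →
      IsProjI I T.obj₁ → IsProjI I T.obj₃ → IsProjI I T.obj₂) := by
  constructor
  · -- 𝔦 = 𝔦² ⇒ projectives closed under extensions
    intro hidem T hT h₁ h₃ B g hg
    have hg2 : g ∈ idealPow (fun X Y => (I.carrier X Y : Set (X ⟶ Y))) 2 T.obj₂ B := by
      rw [hidem]; exact hg
    obtain ⟨W, g₂, g₁, hg₂, hg₁, hfac⟩ := hg2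
    -- g₁ ∈ idealPow 1 means g₁ = a ≫ b with b ∈ I, hence g₁ ∈ I
    obtain ⟨V, c, d, hc, -, h1eq⟩ := hg₁
    have hg₁I : g₁ ∈ I.carrier W B := by
      rw [h1eq]; exact I.comp_mem_left c d hc
    -- T.mor₁ ≫ g₂ ∈ I vanishes since T.obj₁ is projective
    have h0 : T.mor₁ ≫ g₂ = 0 :=
      h₁ W (T.mor₁ ≫ g₂) (I.comp_mem_right T.mor₁ g₂ hg₂)
    obtain ⟨h, hh⟩ := Triangle.yoneda_exact₂ T hT g₂ h0
    have hhg₁ : h ≫ g₁ = 0 :=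
      h₃ B (h ≫ g₁) (I.comp_mem_right h g₁ hg₁I)
    rw [hfac, hh, Category.assoc, hhg₁, comp_zero]
  · -- projectives closed under extensions ⇒ 𝔦 = 𝔦²
    intro hext X Y
    apply Set.eq_of_subset_of_subset
    · -- 𝔦² ⊆ 𝔦 : trivial since 𝔦 is an ideal
      rintro f ⟨W, f₂, f₁, hf₂, -, rfl⟩
      exact I.comp_mem_left f₂ f₁ hf₂
    · -- 𝔦 ⊆ 𝔦² : the main construction
      intro f hf
      have hF0 : ∀ {U V : C}, F.map (0 : U ⟶ V) = 0 := fun {U V} =>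
        (hker (0 : U ⟶ V)).mp (zero_mem _)
      -- choose an 𝔦-projective cover of X
      obtain ⟨P₁, π₁, hP₁, hπ₁⟩ := henough X
      obtain ⟨Z, g, w, hT1⟩ := Pretriangulated.distinguished_cocone_triangle π₁
      -- g ∈ 𝔦 since F(π₁) is epi and π₁ ≫ g = 0
      have hπg : π₁ ≫ g = 0 := Pretriangulated.comp_distTriang_mor_zero₁₂ _ hT1
      have hgI : g ∈ I.carrier X Z := by
        rw [hker]
        have : F.map π₁ ≫ F.map g = F.map π₁ ≫ 0 := by
          rw [← F.map_comp, hπg, hF0, comp_zero]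
        exact (cancel_epi (F.map π₁)).mp this
      have hgw : g ≫ w = 0 := Pretriangulated.comp_distTriang_mor_zero₂₃ _ hT1
      -- choose an 𝔦-projective cover of Z
      obtain ⟨P₂, π₂, hP₂, hπ₂⟩ := henough Z
      obtain ⟨Z₂, g₂, w₂, hT2⟩ := Pretriangulated.distinguished_cocone_triangle π₂
      have hg₂I : g₂ ∈ I.carrier Z Z₂ := by
        rw [hker]
        have hπg₂ : π₂ ≫ g₂ = 0 := Pretriangulated.comp_distTriang_mor_zero₁₂ _ hT2
        have : F.map π₂ ≫ F.map g₂ = F.map π₂ ≫ 0 := by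
          rw [← F.map_comp, hπg₂, hF0, comp_zero]
        exact (cancel_epi (F.map π₂)).mp this
      -- build the extension Q of P₂ by P₁ along δ' = π₂ ≫ w
      obtain ⟨Q, a, b, hS⟩ :=
        Pretriangulated.distinguished_cocone_triangle₂ (π₂ ≫ w)
      have hQ : IsProjI I Q := hext (Triangle.mk a b (π₂ ≫ w)) hS hP₁ hP₂
      -- b ≫ π₂ ≫ w = 0, so b ≫ π₂ factors through g : X ⟶ Z
      have hbδ : b ≫ (π₂ ≫ w) = 0 := Pretriangulated.comp_distTriang_mor_zero₂₃ _ hS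
      obtain ⟨q, hq'⟩ : ∃ q : Q ⟶ X, b ≫ π₂ = q ≫ g :=
        Triangle.coyoneda_exact₃ (Triangle.mk π₁ g w) hT1 (b ≫ π₂)
          (show (b ≫ π₂) ≫ w = 0 by rw [Category.assoc]; exact hbδ)
      -- q ≫ f = 0 since Q is 𝔦-projective
      have hqf : q ≫ f = 0 := hQ Y (q ≫ f) (I.comp_mem_right q f hf)
      -- f factors through g : f = g ≫ h
      have hπf : π₁ ≫ f = 0 := hP₁ Y (π₁ ≫ f) (I.comp_mem_right π₁ f hf)
      obtain ⟨h, hh'⟩ : ∃ h : Z ⟶ Y, f = g ≫ h :=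
        Triangle.yoneda_exact₂ (Triangle.mk π₁ g w) hT1 f hπf
      -- π₂ ≫ h factors through the connecting map (π₂ ≫ w)
      have hb : b ≫ (π₂ ≫ h) = 0 := by
        rw [← Category.assoc, hq', Category.assoc, ← hh', hqf]
      obtain ⟨t, ht'⟩ : ∃ t : P₁⟦(1 : ℤ)⟧ ⟶ Y, π₂ ≫ h = (π₂ ≫ w) ≫ t :=
        Triangle.yoneda_exact₃ (Triangle.mk a b (π₂ ≫ w)) hS (π₂ ≫ h) hb
      -- the corrected map h - w ≫ t is killed by π₂
      have hπ₂h' : π₂ ≫ (h - w ≫ t) = 0 := by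
        rw [Preadditive.comp_sub, ht', ← Category.assoc, sub_self]
      obtain ⟨k, hk'⟩ : ∃ k : Z₂ ⟶ Y, h - w ≫ t = g₂ ≫ k :=
        Triangle.yoneda_exact₂ (Triangle.mk π₂ g₂ w₂) hT2 (h - w ≫ t) hπ₂h'
      -- assemble: f = g ≫ (g₂ ≫ k)
      refine ⟨Z, g, g₂ ≫ k, hgI, ⟨Z₂, g₂, k, hg₂I, trivial, rfl⟩, ?_⟩
      have : g ≫ (h - w ≫ t) = f := by
        rw [Preadditive.comp_sub, ← hh', ← Category.assoc, hgw, zero_comp, sub_zero]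
      rw [← this, hk']
end

section
/- Let 𝔦 be a homological ideal in a triangulated category with a phantom tower over A, and form the cellular approximation tower by exact triangles Ãₙ →^{αₙ} A →^{ιⁿ} Nₙ → Ãₙ[1], where ιⁿ = ι_{n-1}ⁿ ∘ ... ∘ ι₀¹ is the composite of n phantom maps, together with exact triangles Ãₙ → Ã_{n+1} → Pₙ → Ãₙ[1]. Then Ãₙ is 𝔦ⁿ-projective for each n ∈ ℕ. -/
/-!
Induction on `n`: `Ã₀ = 0`, and in the distinguished triangle `Ãₙ → Ãₙ₊₁ → Pₙ → Ãₙ[1]` the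
object `Ãₙ` is `𝔦ⁿ`-projective and `Pₙ` is `𝔦`-projective, so by Christensen's lemma `Ãₙ₊₁` is
projective for `𝔦 ∘ 𝔦ⁿ = 𝔦ⁿ⁺¹`.
-/

open CategoryTheory Limits Pretriangulated

universe v u

/-- The composite `ιⁿ = ι_{n-1}ⁿ ∘ ⋯ ∘ ι₀¹ : N₀ ⟶ Nₙ` of phantom maps. -/
def iotaComp {C : Type u} [Category.{v} C]
    (N : ℕ → C) (ι : ∀ n, N n ⟶ N (n + 1)) : ∀ n, N 0 ⟶ N n
  | 0 => 𝟙 _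
  | n + 1 => iotaComp N ι n ≫ ι n

section IdealPow

variable {C : Type u} [Category.{v} C] {J : ∀ A B : C, Set (A ⟶ B)}

theorem comp_mem_idealPow
    (hJ : ∀ {X A B : C} (h : X ⟶ A) (f : A ⟶ B), f ∈ J A B → h ≫ f ∈ J X B) :
    ∀ (n : ℕ) {X A B : C} (h : X ⟶ A) (f : A ⟶ B),
      f ∈ idealPow J n A B → h ≫ f ∈ idealPow J n X B
  | 0, _, _, _, _, _, _ => trivial
  | _ + 1, _, _, _, h, _, ⟨Y, f₂, f₁, hf₂, hf₁, rfl⟩ =>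
    ⟨Y, h ≫ f₂, f₁, hJ h f₂ hf₂, hf₁, (Category.assoc _ _ _).symm⟩

theorem idealPow_succ_subset_idealProd
    (hJ : ∀ {A B X : C} (f : A ⟶ B) (g : B ⟶ X), f ∈ J A B → f ≫ g ∈ J A X)
    (n : ℕ) (A B : C) : idealPow J (n + 1) A B ⊆ idealProd J (idealPow J n) A B := by
  induction n generalizing A B with
  | zero =>
    rintro _ ⟨_, f₂, f₁, hf₂, _, rfl⟩
    exact ⟨A, 𝟙 A, f₂ ≫ f₁, trivial, hJ f₂ f₁ hf₂, (Category.id_comp _).symm⟩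
  | succ n ih =>
    rintro _ ⟨Y, f₂, f₁, hf₂, hf₁, rfl⟩
    obtain ⟨X, g₂, g₁, hg₂, hg₁, rfl⟩ := ih Y B hf₁
    exact ⟨X, f₂ ≫ g₂, g₁, ⟨Y, f₂, g₂, hf₂, hg₂, rfl⟩, hg₁, (Category.assoc _ _ _).symm⟩

end IdealPow

section Projective

variable {C : Type u} [Category.{v} C] [Preadditive C]

def IsProjFor (J : ∀ A B : C, Set (A ⟶ B)) (P : C) : Prop :=
  ∀ (B : C) (g : P ⟶ B), g ∈ J P B → g = 0

theorem IsProjFor.mono {J J' : ∀ A B : C, Set (A ⟶ B)} {P : C}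
    (hP : IsProjFor J P) (hJ : ∀ B, J' P B ⊆ J P B) : IsProjFor J' P :=
  fun B g hg => hP B g (hJ B hg)

variable [HasZeroObject C] [HasShift C ℤ] [∀ n : ℤ, (shiftFunctor C n).Additive]
  [Pretriangulated C]

/-- Christensen's lemma. -/
theorem isProjFor_idealProd_of_distTriang {J₁ J₂ : ∀ A B : C, Set (A ⟶ B)}
    (hJ₁ : ∀ {X A B : C} (h : X ⟶ A) (f : A ⟶ B), f ∈ J₁ A B → h ≫ f ∈ J₁ X B)
    (hJ₂ : ∀ {X A B : C} (h : X ⟶ A) (f : A ⟶ B), f ∈ J₂ A B → h ≫ f ∈ J₂ X B)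
    (T : Triangle C) (hT : T ∈ distTriang C)
    (h₁ : IsProjFor J₂ T.obj₁) (h₃ : IsProjFor J₁ T.obj₃) :
    IsProjFor (idealProd J₁ J₂) T.obj₂ := by
  rintro B _ ⟨X, f₂, f₁, hf₂, hf₁, rfl⟩
  obtain ⟨h, rfl⟩ := Triangle.yoneda_exact₂ T hT f₂ (h₁ X _ (hJ₂ T.mor₁ f₂ hf₂))
  rw [Category.assoc, h₃ B _ (hJ₁ h f₁ hf₁), comp_zero]

end Projective

/-- In the cellular approximation tower over `A = N 0` associated with a phantom
tower, each object `Ãₙ` is `𝔦ⁿ`-projective. -/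
theorem cellular_approximation_tower_projective
    (C : Type u) [Category.{v} C] [Preadditive C] [HasZeroObject C] [HasShift C ℤ]
    [∀ n : ℤ, (shiftFunctor C n).Additive] [Pretriangulated C]
    (I : CatIdeal C)
    (N P At : ℕ → C)
    (π : ∀ n, P n ⟶ N n)
    (ι : ∀ n, N n ⟶ N (n + 1))
    (ε : ∀ n, N (n + 1) ⟶ (P n)⟦(1 : ℤ)⟧)
    (htri : ∀ n, Triangle.mk (π n) (ι n) (ε n) ∈ (distTriang C))
    (hP : ∀ n, IsProjI I (P n))
    (hι : ∀ n, ι n ∈ I.carrier (N n) (N (n + 1)))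
    (α : ∀ n, At n ⟶ N 0)
    (γ : ∀ n, N n ⟶ (At n)⟦(1 : ℤ)⟧)
    (htriA : ∀ n, Triangle.mk (α n) (iotaComp N ι n) (γ n) ∈ (distTriang C))
    (β : ∀ n, At n ⟶ At (n + 1))
    (σ : ∀ n, At (n + 1) ⟶ P n)
    (κ : ∀ n, P n ⟶ (At n)⟦(1 : ℤ)⟧)
    (htriAP : ∀ n, Triangle.mk (β n) (σ n) (κ n) ∈ (distTriang C))
    (hA0 : IsZero (At 0)) :
    ∀ (n : ℕ) (B : C) (g : At n ⟶ B),
      g ∈ idealPow (fun X Y => (I.carrier X Y : Set (X ⟶ Y))) n (At n) B → g = 0 := by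
  set J := fun X Y => (I.carrier X Y : Set (X ⟶ Y))
  suffices ∀ n, IsProjFor (idealPow J n) (At n) from this
  intro n
  induction n with
  | zero => exact fun B g _ => hA0.eq_of_src g 0
  | succ n ih =>
    have hChristensen : IsProjFor (idealProd J (idealPow J n)) (At (n + 1)) :=
      isProjFor_idealProd_of_distTriang I.comp_mem_right (comp_mem_idealPow I.comp_mem_right n)
        _ (htriAP n) ih (hP n)
    exact hChristensen.mono (idealPow_succ_subset_idealProd I.comp_mem_left n _)
end

section
/- Let 𝒯 be a triangulated category with countable direct sums and let 𝔦 be an ideal compatible with countable direct sums. Then 𝒩_𝔦, the full subcategory of 𝔦-contractible objects (objects N with id_N ∈ 𝔦(N,N)), is a localising subcategory: it is closed under suspensions, exact triangles, retracts, and countable direct sums. -/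
/-! Since `𝔦` is the kernel of `F`, an object `N` is `𝔦`-contractible iff `F N = 0`. For a
distinguished triangle `X → Y → Z → X⟦1⟧` with `X`, `Y` contractible, stability makes `X⟦1⟧`
contractible too, and exactness of `F Y → F Z → F (X⟦1⟧)` forces `F Z = 0`. Retracts and sums
only use that `𝔦` is an ideal, resp. compatible with sums. -/

open CategoryTheory Limits Pretriangulated

universe v u v' u'

namespace CatIdeal

variable {C : Type u} [Category.{v} C] [Preadditive C] (I : CatIdeal C)

lemma mem_of_id_mem_left {X Y : C} (hX : 𝟙 X ∈ I.carrier X X) (f : X ⟶ Y) :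
    f ∈ I.carrier X Y := by
  simpa using I.comp_mem_left (𝟙 X) f hX

lemma id_mem_of_retract {X Y : C} (hY : 𝟙 Y ∈ I.carrier Y Y) (i : X ⟶ Y) (p : Y ⟶ X)
    (hip : i ≫ p = 𝟙 X) : 𝟙 X ∈ I.carrier X X :=
  hip ▸ I.comp_mem_right i p (I.mem_of_id_mem_left hY p)

lemma id_mem_iff_isZero {D : Type u'} [Category.{v'} D] [HasZeroMorphisms D] (F : C ⥤ D)
    (hker : ∀ {X Y : C} (f : X ⟶ Y), f ∈ I.carrier X Y ↔ F.map f = 0) (X : C) :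
    𝟙 X ∈ I.carrier X X ↔ IsZero (F.obj X) := by
  rw [hker, F.map_id, IsZero.iff_id_eq_zero]

end CatIdeal

namespace CategoryTheory.Functor

variable {C : Type u} [Category.{v} C] [Preadditive C] [HasZeroObject C] [HasShift C ℤ]
  [∀ n : ℤ, (shiftFunctor C n).Additive] [Pretriangulated C]
  {D : Type u'} [Category.{v'} D] [Abelian D]

lemma isZero_obj_obj₃_of_distTriang (F : C ⥤ D) [F.IsHomological] (T : Triangle C)
    (hT : T ∈ distTriang C) (h₂ : IsZero (F.obj T.obj₂))
    (h₁ : IsZero (F.obj (T.obj₁⟦(1 : ℤ)⟧))) :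
    IsZero (F.obj T.obj₃) :=
  (F.map_distinguished_exact _ (rot_of_distTriang T hT)).isZero_X₂
    (h₂.eq_of_src _ _) (h₁.eq_of_tgt _ _ :)

end CategoryTheory.Functor

/-- For a homological ideal `𝔦` compatible with countable direct sums in a
triangulated category with countable direct sums, the class `𝒩_𝔦` of
`𝔦`-contractible objects is localising: closed under suspensions, exact
triangles, retracts and countable direct sums. -/
theorem contractibles_localising
    (C : Type u) [Category.{v} C] [Preadditive C] [HasZeroObject C] [HasShift C ℤ]
    [∀ n : ℤ, (shiftFunctor C n).Additive] [Pretriangulated C]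
    [HasCountableCoproducts C]
    (A : Type u') [Category.{v'} A] [Abelian A]
    (F : C ⥤ A) [F.IsHomological]
    (I : CatIdeal C)
    (hker : ∀ {X Y : C} (f : X ⟶ Y), f ∈ I.carrier X Y ↔ F.map f = 0)
    -- `𝔦` is stable:
    (hshift : ∀ {X Y : C} (f : X ⟶ Y) (n : ℤ),
      f ∈ I.carrier X Y → (shiftFunctor C n).map f ∈ I.carrier (X⟦n⟧) (Y⟦n⟧))
    -- `𝔦` is compatible with countable direct sums:
    (hsum : ∀ (ι : Type) [Countable ι] (X : ι → C) (B : C) (f : (∐ X) ⟶ B),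
      ((∀ i, Sigma.ι X i ≫ f ∈ I.carrier (X i) B) ↔ f ∈ I.carrier (∐ X) B)) :
    -- closure under suspensions:
    (∀ X : C, 𝟙 X ∈ I.carrier X X → ∀ n : ℤ, 𝟙 (X⟦n⟧) ∈ I.carrier (X⟦n⟧) (X⟦n⟧)) ∧
    -- closure under exact triangles:
    (∀ T : Triangle C, T ∈ (distTriang C) →
      𝟙 T.obj₁ ∈ I.carrier T.obj₁ T.obj₁ → 𝟙 T.obj₂ ∈ I.carrier T.obj₂ T.obj₂ →
      𝟙 T.obj₃ ∈ I.carrier T.obj₃ T.obj₃) ∧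
    -- closure under retracts:
    (∀ (X Y : C), 𝟙 Y ∈ I.carrier Y Y →
      ∀ (i : X ⟶ Y) (p : Y ⟶ X), i ≫ p = 𝟙 X → 𝟙 X ∈ I.carrier X X) ∧
    -- closure under countable direct sums:
    (∀ (ι : Type) [Countable ι] (X : ι → C),
      (∀ i, 𝟙 (X i) ∈ I.carrier (X i) (X i)) → 𝟙 (∐ X) ∈ I.carrier (∐ X) (∐ X)) := by
  refine ⟨fun X hX n => by simpa using hshift (𝟙 X) n hX, ?_,
    fun X Y hY i p hip => I.id_mem_of_retract hY i p hip,
    fun ι _ X hX => (hsum ι X _ _).1 fun i => I.mem_of_id_mem_left (hX i) _⟩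
  intro T hT h₁ h₂
  have h₁' : 𝟙 (T.obj₁⟦(1 : ℤ)⟧) ∈ I.carrier _ _ := by simpa using hshift (𝟙 T.obj₁) 1 h₁
  rw [I.id_mem_iff_isZero F hker] at h₁' h₂ ⊢
  exact F.isZero_obj_obj₃_of_distTriang T hT h₂ h₁'
end

section
/- Let 𝒯 be a triangulated category with countable direct sums, 𝔦 a homological ideal compatible with countable direct sums, and (Nₙ, ιₙ^{n+1}) a phantom tower over A ∈ 𝒯 (so each ιₙ^{n+1} ∈ 𝔦). Let N = hocolim Nₙ be the homotopy colimit, i.e. the cone of id − S: ⊕Nₙ → ⊕Nₙ where S is the shift map induced by the ιₙ^{n+1}. Then N is 𝔦-contractible: for any stable homological functor F with ker F = 𝔦, F(N) = 0. -/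
open CategoryTheory Limits Pretriangulated

universe v u v' u'

/-
The shift map `S` lies in `𝔦` because each of its components `ιₙ ≫ σₙ₊₁` does, so `F(S) = 0` and,
by stability, `F(S[1]) = 0`. Thus `F(id - S)` and `F((id - S)[1])` are identities, and in the exact
sequence `F(⊕Nₙ) → F(⊕Nₙ) → F(N) → F((⊕Nₙ)[1]) → F((⊕Nₙ)[1])` both maps adjacent to `F(N)` vanish.
-/

namespace CategoryTheory.Functor

lemma isZero_obj₃_of_epi_map_mor₁_of_mono_map_shift_mor₁
    {C : Type u} [Category.{v} C] [Preadditive C] [HasZeroObject C] [HasShift C ℤ]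
    [∀ n : ℤ, (shiftFunctor C n).Additive] [Pretriangulated C]
    {A : Type u'} [Category.{v'} A] [Abelian A] (F : C ⥤ A) [F.IsHomological]
    (T : Triangle C) (hT : T ∈ distTriang C)
    (_ : Epi (F.map T.mor₁)) (_ : Mono (F.map (T.mor₁⟦(1 : ℤ)⟧'))) :
    IsZero (F.obj T.obj₃) := by
  have hmor₂ : F.map T.mor₂ = 0 := by
    rw [← cancel_epi (F.map T.mor₁), ← F.map_comp, comp_distTriang_mor_zero₁₂ _ hT,
      F.map_zero, comp_zero]
  have hmor₃ : F.map T.mor₃ = 0 := by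
    rw [← cancel_mono (F.map (T.mor₁⟦(1 : ℤ)⟧')), ← F.map_comp,
      comp_distTriang_mor_zero₃₁ _ hT, F.map_zero, zero_comp]
  exact (F.map_distinguished_exact _ (rot_of_distTriang _ hT)).isZero_of_both_zeros hmor₂ hmor₃

lemma map_id_sub_eq_id {C : Type u} [Category.{v} C] [Preadditive C]
    {A : Type u'} [Category.{v'} A] [Preadditive A] (F : C ⥤ A) [F.Additive]
    {X : C} (f : X ⟶ X) (hf : F.map f = 0) : F.map (𝟙 X - f) = 𝟙 (F.obj X) := by
  rw [F.map_sub, hf, F.map_id, sub_zero]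

end CategoryTheory.Functor

lemma CatIdeal.sigmaDesc_shift_mem {C : Type u} [Category.{v} C] [Preadditive C]
    [HasCountableCoproducts C] (I : CatIdeal C) (N : ℕ → C)
    (hsum : ∀ (f : (∐ N) ⟶ ∐ N), (∀ n, Sigma.ι N n ≫ f ∈ I.carrier (N n) (∐ N)) →
      f ∈ I.carrier (∐ N) (∐ N))
    (ι : ∀ n, N n ⟶ N (n + 1)) (hι : ∀ n, ι n ∈ I.carrier (N n) (N (n + 1))) :
    Sigma.desc (fun n => ι n ≫ Sigma.ι N (n + 1)) ∈ I.carrier (∐ N) (∐ N) :=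
  hsum _ fun n => by
    rw [Sigma.ι_desc]
    exact I.comp_mem_left _ _ (hι n)

/-- The homotopy colimit of the phantom tower over `A = N 0` is `𝔦`-contractible:
any stable homological functor `F` with `ker F = 𝔦` kills it. -/
theorem hocolim_phantom_tower_contractible
    (C : Type u) [Category.{v} C] [Preadditive C] [HasZeroObject C] [HasShift C ℤ]
    [∀ n : ℤ, (shiftFunctor C n).Additive] [Pretriangulated C]
    [HasCountableCoproducts C]
    (A : Type u') [Category.{v'} A] [Abelian A]
    (F : C ⥤ A) [F.IsHomological]
    (I : CatIdeal C)
    (hker : ∀ {X Y : C} (f : X ⟶ Y), f ∈ I.carrier X Y ↔ F.map f = 0)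
    (hshift : ∀ {X Y : C} (f : X ⟶ Y) (n : ℤ),
      f ∈ I.carrier X Y → (shiftFunctor C n).map f ∈ I.carrier (X⟦n⟧) (Y⟦n⟧))
    -- `𝔦` is compatible with countable direct sums:
    (hsum : ∀ (ι : Type) [Countable ι] (X : ι → C) (B : C) (f : (∐ X) ⟶ B),
      ((∀ i, Sigma.ι X i ≫ f ∈ I.carrier (X i) B) ↔ f ∈ I.carrier (∐ X) B))
    -- a phantom tower over `A = N 0`:
    (N P : ℕ → C)
    (π : ∀ n, P n ⟶ N n)
    (ι : ∀ n, N n ⟶ N (n + 1))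
    (ε : ∀ n, N (n + 1) ⟶ (P n)⟦(1 : ℤ)⟧)
    (htri : ∀ n, Triangle.mk (π n) (ι n) (ε n) ∈ (distTriang C))
    (hP : ∀ n, IsProjI I (P n))
    (hι : ∀ n, ι n ∈ I.carrier (N n) (N (n + 1)))
    -- the homotopy colimit `Nc` of the tower, as the cone of `id - S`:
    (Nc : C) (toNc : (∐ N) ⟶ Nc) (δ : Nc ⟶ (∐ N)⟦(1 : ℤ)⟧)
    (htriNc : Triangle.mk
      (𝟙 (∐ N) - Sigma.desc (fun n => ι n ≫ Sigma.ι N (n + 1))) toNc δ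
        ∈ (distTriang C)) :
    IsZero (F.obj Nc) := by
  set S := Sigma.desc (fun n => ι n ≫ Sigma.ι N (n + 1))
  have hS : S ∈ I.carrier (∐ N) (∐ N) :=
    I.sigmaDesc_shift_mem N (fun f => (hsum ℕ N _ f).1) ι hι
  have hFS : F.map (𝟙 _ - S) = 𝟙 _ := F.map_id_sub_eq_id S ((hker S).1 hS)
  have hFS₁ : F.map ((𝟙 _ - S)⟦(1 : ℤ)⟧') = 𝟙 _ := by
    rw [Functor.map_sub, (shiftFunctor C (1 : ℤ)).map_id]
    exact F.map_id_sub_eq_id _ ((hker _).1 (hshift S 1 hS))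
  have hepi : Epi (F.map (𝟙 _ - S)) := by rw [hFS]; infer_instance
  have hmono : Mono (F.map ((𝟙 _ - S)⟦(1 : ℤ)⟧')) := by rw [hFS₁]; infer_instance
  exact F.isZero_obj₃_of_epi_map_mor₁_of_mono_map_shift_mor₁ _ htriNc hepi hmono
end

section
/- Let 𝒩 be a reflective localising subcategory of a triangulated category 𝒯 (the inclusion 𝒩 → 𝒯 has a left adjoint N: 𝒯 → 𝒩) and let 𝔏 = {A ∈ 𝒯 : N(A) = 0} be the left orthogonal complement. Then (𝔏, 𝒩) is a complementary pair, and 𝔏 is the only thick subcategory with this property: any thick 𝔏' with (𝔏', 𝒩) complementary equals 𝔏. -/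
open CategoryTheory Limits Pretriangulated

universe v u

/-!
Write `η : A ⟶ R A` for the unit. For `W ∈ 𝒩`, composition with `η` is a bijection
`Hom(R A, W) ≃ Hom(A, W)`; hence `R A = 0` iff `A` is left orthogonal to `𝒩`. As `𝒩` is stable
under shifts, the same holds for `η⟦1⟧`, and the long exact `Hom(-, W)`-sequence shows that the
cone of `η` is left orthogonal to `𝒩`; rotating the triangle on `η` gives the decomposition of `A`.
Conversely, if `(𝔏', 𝒩)` is complementary and `X` is left orthogonal to `𝒩`, the map `X ⟶ N` in
the triangle of `X` vanishes, so `X` is a retract of its `𝔏'`-part: thus any such `𝔏'` closed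
under retracts is the left orthogonal of `𝒩`.
-/

/-- A complementary pair of classes of objects in a triangulated category. -/
def ComplementaryPair (C : Type u) [Category.{v} C] [Preadditive C] [HasZeroObject C]
    [HasShift C ℤ] [∀ n : ℤ, (shiftFunctor C n).Additive] [Pretriangulated C]
    (L N : Set C) : Prop :=
  (∀ X ∈ L, ∀ Y ∈ N, ∀ (n : ℤ) (f : X⟦n⟧ ⟶ Y), f = 0) ∧
  (∀ A : C, ∃ (X Y : C) (f : X ⟶ A) (g : A ⟶ Y) (h : Y ⟶ X⟦(1 : ℤ)⟧),
    Triangle.mk f g h ∈ (distTriang C) ∧ X ∈ L ∧ Y ∈ N)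

/-- A thick subcategory: closed under isomorphisms, shifts, exact triangles and
retracts. -/
def IsThick (C : Type u) [Category.{v} C] [Preadditive C] [HasZeroObject C]
    [HasShift C ℤ] [∀ n : ℤ, (shiftFunctor C n).Additive] [Pretriangulated C]
    (T : Set C) : Prop :=
  (∀ {X Y : C}, (X ≅ Y) → X ∈ T → Y ∈ T) ∧
  (∀ X ∈ T, ∀ n : ℤ, X⟦n⟧ ∈ T) ∧
  (∀ T' : Triangle C, T' ∈ (distTriang C) → T'.obj₁ ∈ T → T'.obj₂ ∈ T → T'.obj₃ ∈ T) ∧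
  (∀ (X Y : C), Y ∈ T → ∀ (i : X ⟶ Y) (p : Y ⟶ X), i ≫ p = 𝟙 X → X ∈ T)

/-- A localising subcategory: a thick subcategory closed under countable direct
sums. -/
def IsLocalising (C : Type u) [Category.{v} C] [Preadditive C] [HasZeroObject C]
    [HasShift C ℤ] [∀ n : ℤ, (shiftFunctor C n).Additive] [Pretriangulated C]
    [HasCountableCoproducts C] (T : Set C) : Prop :=
  IsThick C T ∧
  (∀ (ι : Type) [Countable ι] (X : ι → C), (∀ i, X i ∈ T) → (∐ X) ∈ T)

namespace CategoryTheory

variable {C : Type u} [Category.{v} C]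

theorem Adjunction.map_comp_surjective {D : Type*} [Category D] {F : C ⥤ D} {G : D ⥤ C}
    (adj : F ⊣ G) {A B : C} (f : A ⟶ B) (Y : D)
    (h : Function.Surjective fun u : B ⟶ G.obj Y => f ≫ u) :
    Function.Surjective fun u : F.obj B ⟶ Y => F.map f ≫ u := by
  intro θ
  obtain ⟨u, hu⟩ := h (adj.homEquiv A Y θ)
  refine ⟨(adj.homEquiv B Y).symm u, ?_⟩
  dsimp only at hu ⊢
  rw [← adj.homEquiv_naturality_left_symm, hu, Equiv.symm_apply_apply]

section Reflective

variable {P : ObjectProperty C} {R : C ⥤ P.FullSubcategory} (adj : R ⊣ P.ι)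
include adj

theorem Adjunction.unit_app_comp_bijective {A W : C} (hW : P W) :
    Function.Bijective fun u : (R.obj A).obj ⟶ W => adj.unit.app A ≫ u := by
  have : (fun u : (R.obj A).obj ⟶ W => adj.unit.app A ≫ u) =
      adj.homEquiv A ⟨W, hW⟩ ∘ P.fullyFaithfulι.homEquiv.symm := by
    ext u
    rw [Function.comp_apply, adj.homEquiv_unit]
    exact congrArg _ (P.fullyFaithfulι.map_preimage (X := R.obj A) (Y := ⟨W, hW⟩) u).symm
  rw [this]
  exact (Equiv.bijective _).comp (Equiv.bijective _)

theorem Adjunction.isZero_obj_iff_leftOrthogonal [HasZeroMorphisms C] (X : C) :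
    IsZero (R.obj X).obj ↔ P.leftOrthogonal X := by
  constructor
  · intro hX Y f hY
    obtain ⟨u, rfl⟩ := (adj.unit_app_comp_bijective hY).2 f
    simp [hX.eq_of_src u 0]
  · intro hX
    rw [IsZero.iff_id_eq_zero]
    apply (adj.unit_app_comp_bijective (R.obj X).property).1
    simp [hX (adj.unit.app X) (R.obj X).property]

end Reflective

section Pretriangulated

variable [Preadditive C] [HasZeroObject C] [HasShift C ℤ]
  [∀ n : ℤ, (shiftFunctor C n).Additive] [Pretriangulated C]

theorem leftOrthogonal_obj₃_of_bijective (P : ObjectProperty C) [P.IsStableUnderShift ℤ]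
    (T : Triangle C) (hT : T ∈ distTriang C)
    (h : ∀ W, P W → Function.Bijective fun u : T.obj₂ ⟶ W => T.mor₁ ≫ u) :
    P.leftOrthogonal T.obj₃ := by
  intro W ψ hW
  have hψ : T.mor₂ ≫ ψ = 0 := (h W hW).1 <| by
    dsimp only
    rw [comp_distTriang_mor_zero₁₂_assoc _ hT, zero_comp, comp_zero]
  obtain ⟨θ, rfl⟩ := Triangle.yoneda_exact₃ T hT ψ hψ
  obtain ⟨u, rfl⟩ := (shiftEquiv C (1 : ℤ)).toAdjunction.map_comp_surjective T.mor₁ W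
    (h _ (P.le_shift (-1) W hW)).2 θ
  exact (comp_distTriang_mor_zero₃₁_assoc T hT u).trans zero_comp

theorem complementaryPair_leftOrthogonal_of_bijective (N : Set C)
    [ObjectProperty.IsStableUnderShift (· ∈ N) ℤ]
    (h : ∀ A : C, ∃ (B : C) (f : A ⟶ B), B ∈ N ∧
      ∀ W ∈ N, Function.Bijective fun u : B ⟶ W => f ≫ u) :
    ComplementaryPair C {X | ObjectProperty.leftOrthogonal (· ∈ N) X} N := by
  constructor
  · intro X hX Y hY n f
    exact (ObjectProperty.leftOrthogonal (· ∈ N)).le_shift n X hX f hY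
  · intro A
    obtain ⟨B, f, hB, hf⟩ := h A
    obtain ⟨Z, g, k, hT⟩ := distinguished_cocone_triangle f
    have hZ := leftOrthogonal_obj₃_of_bijective (· ∈ N) _ hT hf
    exact ⟨_, _, _, _, _, inv_rot_of_distTriang _ hT,
      (ObjectProperty.leftOrthogonal (· ∈ N)).le_shift (-1) Z hZ, hB⟩

theorem eq_leftOrthogonal_of_complementaryPair {L N : Set C}
    (hL : ∀ (X Y : C), Y ∈ L → ∀ (i : X ⟶ Y) (p : Y ⟶ X), i ≫ p = 𝟙 X → X ∈ L)
    (h : ComplementaryPair C L N) :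
    L = {X | ObjectProperty.leftOrthogonal (· ∈ N) X} := by
  ext X
  constructor
  · intro hX Y f hY
    rw [← (shiftFunctorZero C ℤ).inv_hom_id_app_assoc X f,
      h.1 X hX Y hY 0 ((shiftFunctorZero C ℤ).hom.app X ≫ f), comp_zero]
  · intro hX
    obtain ⟨X', Y', f, g, k, hT, hX', hY'⟩ := h.2 X
    obtain ⟨p, hp⟩ := Triangle.coyoneda_exact₂ _ hT (𝟙 X)
      ((Category.id_comp g).trans (hX g hY'))
    exact hL X X' hX' p f hp.symm

end Pretriangulated

end CategoryTheory

/-- If `𝒩` is a reflective localising subcategory (the inclusion has a left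
adjoint `R`) and `𝔏 = {A : R(A) = 0}`, then `(𝔏, 𝒩)` is a complementary pair,
and `𝔏` is the only thick subcategory with this property. -/
theorem reflective_complementary_unique
    (C : Type u) [Category.{v} C] [Preadditive C] [HasZeroObject C] [HasShift C ℤ]
    [∀ n : ℤ, (shiftFunctor C n).Additive] [Pretriangulated C]
    [HasCountableCoproducts C]
    (Nset : Set C) (hN : IsLocalising C Nset)
    (R : C ⥤ ObjectProperty.FullSubcategory (fun X => X ∈ Nset))
    (adj : R ⊣ ObjectProperty.ι (fun X => X ∈ Nset)) :
    ComplementaryPair C {X : C | IsZero ((R.obj X).obj)} Nset ∧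
    (∀ L' : Set C, IsThick C L' → ComplementaryPair C L' Nset →
      L' = {X : C | IsZero ((R.obj X).obj)}) := by
  have : ObjectProperty.IsStableUnderShift (· ∈ Nset) ℤ :=
    ⟨fun n => ⟨fun X hX => hN.1.2.1 X hX n⟩⟩
  have hL : {X : C | IsZero ((R.obj X).obj)} =
      {X | ObjectProperty.leftOrthogonal (· ∈ Nset) X} :=
    Set.ext adj.isZero_obj_iff_leftOrthogonal
  rw [hL]
  exact ⟨complementaryPair_leftOrthogonal_of_bijective Nset fun A =>
      ⟨_, adj.unit.app A, (R.obj A).property, fun _ hW => adj.unit_app_comp_bijective hW⟩,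
    fun L' hL' h => eq_leftOrthogonal_of_complementaryPair hL'.2.2.2 h⟩
end
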